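/- arXiv:1810.08161 — 4 statements merged into one kernel-verified Lean document; each statement's English description precedes it below -/
import Mathlib

section
/- Let S be uniform on {1,…,M}, let (S, Yⁿ) be jointly distributed, and let L = M/r be a desired list size with 1 ≤ r ≤ M. Let {𝒟_m} be the decision regions of a list decoder with L_n(yⁿ) = {m : yⁿ ∈ 𝒟_m}. Then for any γ > 0, Pr( P(S|Yⁿ) ≤ e^{−nγ}/L ) ≤ Pr(S ∉ L_n(Yⁿ)) + (e^{−nγ}/L) · E[|L_n(Yⁿ)|]. -/
/-!
Let `c = e^{-nγ}/L`. Split the event `{P(S|Yⁿ) ≤ c}` according to whether `S ∈ Lₙ(Yⁿ)`.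
The part where decoding fails has probability at most `Pr(S ∉ Lₙ(Yⁿ))`. On the other part,
for a fixed message `s` the output lies in `B_s = {y ∈ 𝒟_s : P(s|y) ≤ c}`, and
`Pr(S = s, Yⁿ ∈ B_s) = ∑_{y ∈ B_s} P(s|y) Pr(Yⁿ = y) ≤ c Pr(Yⁿ ∈ 𝒟_s)`.
Summing over `s` gives `c ∑_s Pr(Yⁿ ∈ 𝒟_s) = c E[|Lₙ(Yⁿ)|]`.
-/

open Finset Real
open scoped Classical

noncomputable def prob {Ω : Type} [Fintype Ω] (p : Ω → ℝ) (E : Set Ω) : ℝ :=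
  ∑ ω ∈ Finset.univ.filter (fun ω => ω ∈ E), p ω

/-- `P(s|y)`; it is `0` when `Pr(Y = y) = 0`. -/
noncomputable def condProb {Ω α 𝒴 : Type} [Fintype Ω] (p : Ω → ℝ) (S : Ω → α) (Y : Ω → 𝒴)
    (s : α) (y : 𝒴) : ℝ :=
  prob p {ω | S ω = s ∧ Y ω = y} / prob p {ω | Y ω = y}

lemma le_mul_of_div_le_of_le {a b c : ℝ} (ha : 0 ≤ a) (hab : a ≤ b) (h : a / b ≤ c) :
    a ≤ c * b := by
  rcases (ha.trans hab).lt_or_eq with hb | hb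
  · exact (div_le_iff₀ hb).mp h
  · simp [← hb, le_antisymm (hb ▸ hab) ha]

section FiniteProb

variable {Ω : Type} [Fintype Ω] {p : Ω → ℝ}

lemma prob_nonneg (hp : ∀ ω, 0 ≤ p ω) (E : Set Ω) : 0 ≤ prob p E :=
  sum_nonneg fun ω _ => hp ω

lemma prob_mono (hp : ∀ ω, 0 ≤ p ω) {E F : Set Ω} (h : E ⊆ F) : prob p E ≤ prob p F :=
  sum_le_sum_of_subset_of_nonneg (monotone_filter_right _ fun ω _ => @h ω) fun ω _ _ => hp ω

lemma prob_inter_add_prob_diff (E F : Set Ω) : prob p (E ∩ F) + prob p (E \ F) = prob p E := by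
  simp only [prob, Set.mem_inter_iff, Set.mem_sdiff, ← filter_filter]
  exact sum_filter_add_sum_filter_not _ _ _

lemma prob_inter_preimage_finset {β : Type} (X : Ω → β) (E : Set Ω) (B : Finset β) :
    prob p (E ∩ X ⁻¹' B) = ∑ b ∈ B, prob p (E ∩ X ⁻¹' {b}) := by
  simp only [prob, Set.mem_inter_iff, Set.mem_preimage, mem_coe, Set.mem_singleton_iff]
  rw [← sum_fiberwise_of_maps_to (g := X) (t := B) (by simp)]
  refine sum_congr rfl fun b hb => sum_congr ?_ fun _ _ => rfl
  ext ω
  simp only [mem_filter, mem_univ, true_and]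
  constructor
  · rintro ⟨⟨hE, -⟩, rfl⟩; exact ⟨hE, rfl⟩
  · rintro ⟨hE, rfl⟩; exact ⟨⟨hE, hb⟩, rfl⟩

lemma prob_eq_sum_prob_inter_preimage {β : Type} [Fintype β] (X : Ω → β) (E : Set Ω) :
    prob p E = ∑ b, prob p (E ∩ X ⁻¹' {b}) := by
  simpa using prob_inter_preimage_finset (p := p) X E univ

lemma sum_mul_card_filter_eq_sum_prob {α : Type} [Fintype α] (R : Ω → α → Prop)
    [∀ ω, DecidablePred (R ω)] :
    ∑ ω, p ω * (#{a | R ω a} : ℝ) = ∑ a, prob p {ω | R ω a} := by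
  simp only [natCast_card_filter, mul_sum, mul_ite, mul_one, mul_zero, prob, sum_filter]
  rw [sum_comm]
  congr!

end FiniteProb

section ListDecoding

variable {Ω α 𝒴 : Type} [Fintype Ω] {p : Ω → ℝ}

lemma prob_inter_preimage_le_mul_of_condProb_le (hp : ∀ ω, 0 ≤ p ω) (S : Ω → α) (Y : Ω → 𝒴)
    (s : α) (B : Finset 𝒴) {c : ℝ} (hB : ∀ y ∈ B, condProb p S Y s y ≤ c) :
    prob p ({ω | S ω = s} ∩ Y ⁻¹' B) ≤ c * prob p (Y ⁻¹' B) := by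
  rw [prob_inter_preimage_finset, ← Set.univ_inter (Y ⁻¹' B), prob_inter_preimage_finset,
    mul_sum]
  refine sum_le_sum fun y hy => le_mul_of_div_le_of_le (prob_nonneg hp _)
    (prob_mono hp (Set.inter_subset_inter_left _ (Set.subset_univ _))) ?_
  rw [Set.univ_inter]
  exact hB y hy

theorem prob_condProb_le_le_prob_notMem_add [Fintype α] (hp : ∀ ω, 0 ≤ p ω) (S : Ω → α)
    (Y : Ω → 𝒴) (D : α → Finset 𝒴) {c : ℝ} (hc : 0 ≤ c) :
    prob p {ω | condProb p S Y (S ω) (Y ω) ≤ c}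
      ≤ prob p {ω | Y ω ∉ D (S ω)} + c * ∑ ω, p ω * #{m | Y ω ∈ D m} := by
  set A := {ω | condProb p S Y (S ω) (Y ω) ≤ c}
  set Bad := {ω | Y ω ∉ D (S ω)}
  let B (s : α) : Finset 𝒴 := (D s).filter fun y => condProb p S Y s y ≤ c
  have decoded : prob p (A \ Bad) = ∑ s, prob p ({ω | S ω = s} ∩ Y ⁻¹' B s) := by
    rw [prob_eq_sum_prob_inter_preimage S]
    refine sum_congr rfl fun s _ => congrArg _ ?_
    ext ω
    simp only [A, Bad, B, Set.mem_inter_iff, Set.mem_sdiff, Set.mem_ofPred_eq, Set.mem_preimage,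
      Set.mem_singleton_iff, not_not, mem_coe, mem_filter]
    constructor
    · rintro ⟨⟨hA, hD⟩, rfl⟩; exact ⟨rfl, hD, hA⟩
    · rintro ⟨rfl, hD, hA⟩; exact ⟨⟨hA, hD⟩, rfl⟩
  have per_message (s : α) :
      prob p ({ω | S ω = s} ∩ Y ⁻¹' B s) ≤ c * prob p {ω | Y ω ∈ D s} :=
    calc _ ≤ c * prob p (Y ⁻¹' B s) :=
          prob_inter_preimage_le_mul_of_condProb_le hp S Y s _ fun _ hy => (mem_filter.mp hy).2
      _ ≤ _ := mul_le_mul_of_nonneg_left (prob_mono hp fun _ hω => (mem_filter.mp hω).1) hc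
  calc prob p A = prob p (A ∩ Bad) + prob p (A \ Bad) := (prob_inter_add_prob_diff A Bad).symm
    _ ≤ prob p Bad + ∑ s, c * prob p {ω | Y ω ∈ D s} := by
      rw [decoded]
      exact add_le_add (prob_mono hp Set.inter_subset_right) (sum_le_sum fun s _ => per_message s)
    _ = prob p Bad + c * ∑ ω, p ω * #{m | Y ω ∈ D m} := by
      rw [← mul_sum, sum_mul_card_filter_eq_sum_prob fun ω m => Y ω ∈ D m]

end ListDecoding

theorem stmt_5_general {Ω 𝒴 : Type} [Fintype Ω]
    (p : Ω → ℝ) (hp : ∀ ω, 0 ≤ p ω)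
    (M : ℕ)
    (S : Ω → Fin M) (Y : Ω → 𝒴)
    (D : Fin M → Finset 𝒴)
    (r n γ : ℝ) (hr1 : 1 ≤ r) :
    prob p {ω | prob p {ω' | S ω' = S ω ∧ Y ω' = Y ω} / prob p {ω' | Y ω' = Y ω}
        ≤ Real.exp (-(n * γ)) / ((M : ℝ) / r)}
      ≤ prob p {ω | Y ω ∉ D (S ω)}
        + (Real.exp (-(n * γ)) / ((M : ℝ) / r)) *
            ∑ ω, p ω * ((Finset.univ.filter (fun m : Fin M => Y ω ∈ D m)).card : ℝ) :=
  prob_condProb_le_le_prob_notMem_add hp S Y D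
    (div_nonneg (exp_pos _).le (div_nonneg M.cast_nonneg (by linarith)))

/-- The information-spectrum step in the converse for general channels:
`Pr(P(S|Yⁿ) ≤ e^{-nγ}/L) ≤ Pr(S ∉ Lₙ(Yⁿ)) + (e^{-nγ}/L) E[|Lₙ(Yⁿ)|]`,
where `L = M/r` and `Lₙ(y) = {m : y ∈ 𝒟ₘ}`. -/
theorem stmt_5 {Ω 𝒴 : Type} [Fintype Ω] [Fintype 𝒴]
    (p : Ω → ℝ) (hp : ∀ ω, 0 ≤ p ω) (hsum : ∑ ω, p ω = 1)
    (M : ℕ) (hM : 1 ≤ M)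
    (S : Ω → Fin M) (Y : Ω → 𝒴)
    (hunif : ∀ s : Fin M, prob p {ω | S ω = s} = 1 / M)
    (D : Fin M → Finset 𝒴)
    (r n γ : ℝ) (hr1 : 1 ≤ r) (hrM : r ≤ (M : ℝ)) (hn : 0 < n) (hγ : 0 < γ) :
    prob p {ω | prob p {ω' | S ω' = S ω ∧ Y ω' = Y ω} / prob p {ω' | Y ω' = Y ω}
        ≤ Real.exp (-(n * γ)) / ((M : ℝ) / r)}
      ≤ prob p {ω | Y ω ∉ D (S ω)}
        + (Real.exp (-(n * γ)) / ((M : ℝ) / r)) *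
            ∑ ω, p ω * ((Finset.univ.filter (fun m : Fin M => Y ω ∈ D m)).card : ℝ) :=
  stmt_5_general p hp M S Y D r n γ hr1
end

section
/- With the setup of the previous lemma, for any ratio r ∈ [1, M] and any n > 0: Pr( |{x' ∈ 𝒞 : q(x',Yⁿ) ≥ q(Xⁿ,Yⁿ)}| > M/r ) = Pr( −(1/n) log Φ(Xⁿ,Yⁿ) < (1/n) log r ). -/
open Finset Real
open scoped Classical

/-- Lemma 2: `P_{e,r} = Pr{ -(1/n) log Φ(Xⁿ,Yⁿ) < (1/n) log r }`. -/
theorem stmt_7 {Ω 𝒳 𝒴 : Type} [Fintype Ω] [Fintype 𝒳] [DecidableEq 𝒳]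
    (p : Ω → ℝ) (hp : ∀ ω, 0 ≤ p ω) (hsum : ∑ ω, p ω = 1)
    (C : Finset 𝒳) (M : ℕ) (hC : C.card = M) (hM : 1 ≤ M)
    (X Xt : Ω → 𝒳) (Y : Ω → 𝒴)
    (hXC : ∀ ω, X ω ∈ C)
    (hXunif : ∀ x ∈ C, prob p {ω | X ω = x} = 1 / M)
    (hXtC : ∀ ω, Xt ω ∈ C)
    (hXtunif : ∀ x ∈ C, prob p {ω | Xt ω = x} = 1 / M)
    (hindep : ∀ (x x' : 𝒳) (y : 𝒴),
      prob p {ω | Xt ω = x' ∧ X ω = x ∧ Y ω = y}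
        = prob p {ω | Xt ω = x'} * prob p {ω | X ω = x ∧ Y ω = y})
    (q : 𝒳 → 𝒴 → ℝ)
    (Φ : 𝒳 → 𝒴 → ℝ)
    (hΦ : ∀ x y, Φ x y = prob p {ω | q (Xt ω) y ≥ q x y})
    (r n : ℝ) (hr1 : 1 ≤ r) (hrM : r ≤ (M : ℝ)) (hn : 0 < n) :
    prob p {ω | ((C.filter (fun x' => q x' (Y ω) ≥ q (X ω) (Y ω))).card : ℝ)
        > (M : ℝ) / r}
      = prob p {ω | -(1 / n) * Real.log (Φ (X ω) (Y ω)) < (1 / n) * Real.log r} := by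
  have hM0 : (0 : ℝ) < (M : ℝ) := by exact_mod_cast hM
  have hr0 : (0 : ℝ) < r := lt_of_lt_of_le one_pos hr1
  -- Φ x y = card / M
  have hΦcard : ∀ x y, Φ x y
      = ((C.filter (fun x' => q x' y ≥ q x y)).card : ℝ) / M := by
    intro x y
    rw [hΦ]
    unfold prob
    have hmaps : ∀ ω ∈ Finset.univ.filter
        (fun ω => ω ∈ {ω | q (Xt ω) y ≥ q x y}), Xt ω ∈ C := fun ω _ => hXtC ω
    rw [← Finset.sum_fiberwise_of_maps_to hmaps p]
    have key : ∀ x' ∈ C,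
        (∑ ω ∈ (Finset.univ.filter
          (fun ω => ω ∈ {ω | q (Xt ω) y ≥ q x y})).filter (fun ω => Xt ω = x'), p ω)
        = if q x' y ≥ q x y then (1 : ℝ) / M else 0 := by
      intro x' hx'
      by_cases h : q x' y ≥ q x y
      · rw [if_pos h, ← hXtunif x' hx']
        unfold prob
        congr 1
        ext ω
        simp only [Finset.mem_filter, Finset.mem_univ, true_and, Set.mem_setOf_eq]
        constructor
        · rintro ⟨_, h2⟩; exact h2
        · rintro h2; exact ⟨h2 ▸ h, h2⟩
      · rw [if_neg h]
        apply Finset.sum_eq_zero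
        intro ω hω
        simp only [Finset.mem_filter, Finset.mem_univ, true_and,
          Set.mem_setOf_eq] at hω
        exact absurd (hω.2 ▸ hω.1) h
    rw [Finset.sum_congr rfl key, Finset.sum_ite, Finset.sum_const_zero, add_zero,
      Finset.sum_const]
    simp [Finset.filter_filter, div_eq_mul_inv, mul_comm]
  -- events are equal
  congr 1
  ext ω
  set N : ℕ := (C.filter (fun x' => q x' (Y ω) ≥ q (X ω) (Y ω))).card with hN
  have hNpos : 0 < N := by
    apply Finset.card_pos.2
    exact ⟨X ω, Finset.mem_filter.2 ⟨hXC ω, le_refl _⟩⟩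
  have hN0 : (0 : ℝ) < (N : ℝ) := by exact_mod_cast hNpos
  simp only [Set.mem_setOf_eq, hΦcard]
  rw [show ((C.filter (fun x' => q x' (Y ω) ≥ q (X ω) (Y ω))).card : ℝ) = (N : ℝ) from rfl]
  constructor
  · intro h
    have h1 : (1 : ℝ) / r < (N : ℝ) / M := by
      rw [div_lt_div_iff₀ hr0 hM0, one_mul]
      rw [gt_iff_lt, div_lt_iff₀ hr0] at h
      linarith
    have := (Real.log_lt_log_iff (by positivity) (by positivity)).2 h1
    rw [Real.log_div one_ne_zero (ne_of_gt hr0), Real.log_one] at this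
    have hninv : (0 : ℝ) < 1 / n := by positivity
    nlinarith [mul_lt_mul_of_pos_left this hninv]
  · intro h
    have hninv : (0 : ℝ) < 1 / n := by positivity
    have h2 : -Real.log ((N : ℝ) / M) < Real.log r := by
      have := (mul_lt_mul_iff_right₀ hninv).1 (by linarith [h] :
        (1 / n) * (-Real.log ((N : ℝ) / M)) < (1 / n) * Real.log r)
      linarith
    have h3 : Real.log (1 / r) < Real.log ((N : ℝ) / M) := by
      rw [Real.log_div one_ne_zero (ne_of_gt hr0), Real.log_one]
      linarith
    have h4 := (Real.log_lt_log_iff (by positivity) (by positivity)).1 h3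
    rw [div_lt_div_iff₀ hr0 hM0, one_mul] at h4
    rw [gt_iff_lt, div_lt_iff₀ hr0]
    linarith
end

section
/- For all integers M ≥ 2, L with 1 ≤ L ≤ M, and Φ ∈ (0,1): 1{Φ ≥ L/(M−1)} + exp(−M·D(L/M ∥ Φ))·1{Φ < L/(M−1)} ≤ exp(−L·[log L − log(MΦ) − 1]₊), where [t]₊ = max{0,t} and D is binary relative entropy. -/
open Finset Real
open scoped Classical

/-- Binary relative entropy `D(p‖q)` (natural logarithm). -/
noncomputable def binKL (p q : ℝ) : ℝ :=
  p * Real.log (p / q) + (1 - p) * Real.log ((1 - p) / (1 - q))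

lemma aux_log_lb (x : ℝ) (hx : 0 < x) : 1 - 1/x ≤ Real.log x := by
  have h := Real.log_le_sub_one_of_pos (show (0:ℝ) < x⁻¹ by positivity)
  rw [Real.log_inv] at h
  rw [one_div]
  linarith

/-- Second inequality in Merhav's chain:
`1{Φ ≥ L/(M-1)} + e^{-M D(L/M ‖ Φ)} 1{Φ < L/(M-1)}
  ≤ exp(-L [log L - log(MΦ) - 1]₊)`. -/
theorem stmt_9 (M L : ℕ) (hM : 2 ≤ M) (hL1 : 1 ≤ L) (hLM : L ≤ M)
    (Φ : ℝ) (hΦ0 : 0 < Φ) (hΦ1 : Φ < 1) :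
    (if Φ ≥ (L : ℝ) / ((M : ℝ) - 1) then 1 else 0)
        + Real.exp (-(M : ℝ) * binKL ((L : ℝ) / (M : ℝ)) Φ) *
            (if Φ < (L : ℝ) / ((M : ℝ) - 1) then 1 else 0)
      ≤ Real.exp (-(L : ℝ) *
          max (Real.log (L : ℝ) - Real.log ((M : ℝ) * Φ) - 1) 0) := by
  have hM2 : (2:ℝ) ≤ (M:ℝ) := by exact_mod_cast hM
  have hM0 : (0:ℝ) < M := by linarith
  have hL0 : (0:ℝ) < L := by exact_mod_cast hL1
  have hLMr : (L:ℝ) ≤ M := by exact_mod_cast hLM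
  have hΦ1' : (0:ℝ) < 1 - Φ := by linarith
  have hexpand : (M:ℝ) * binKL ((L:ℝ)/(M:ℝ)) Φ =
      (L:ℝ) * Real.log ((L:ℝ)/((M:ℝ)*Φ)) +
      ((M:ℝ)-(L:ℝ)) * Real.log (((M:ℝ)-(L:ℝ))/((M:ℝ)*(1-Φ))) := by
    unfold binKL
    have h1 : (L:ℝ)/(M:ℝ)/Φ = (L:ℝ)/((M:ℝ)*Φ) := div_div _ _ _
    have h2 : (1 - (L:ℝ)/(M:ℝ)) = ((M:ℝ)-(L:ℝ))/(M:ℝ) := by field_simp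
    rw [h1, h2, div_div]
    field_simp
  have key2 : -(L:ℝ) ≤ ((M:ℝ)-(L:ℝ)) * Real.log (((M:ℝ)-(L:ℝ))/((M:ℝ)*(1-Φ))) := by
    rcases eq_or_lt_of_le hLMr with hEq | hlt
    · rw [← hEq]
      simp
    · have hML : (0:ℝ) < (M:ℝ) - L := by linarith
      have b := aux_log_lb (((M:ℝ)-L)/((M:ℝ)*(1-Φ))) (by positivity)
      rw [one_div_div] at b
      have m := mul_le_mul_of_nonneg_left b hML.le
      have e : ((M:ℝ)-L) * (1 - (M:ℝ)*(1-Φ)/((M:ℝ)-L)) = ((M:ℝ)-L) - (M:ℝ)*(1-Φ) := by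
        field_simp
      rw [e] at m
      nlinarith [mul_pos hM0 hΦ0]
  have hD0 : 0 ≤ (M:ℝ) * binKL ((L:ℝ)/(M:ℝ)) Φ := by
    rw [hexpand]
    have key1 : -((M:ℝ)*Φ) + (L:ℝ) ≤ (L:ℝ) * Real.log ((L:ℝ)/((M:ℝ)*Φ)) := by
      have b := aux_log_lb ((L:ℝ)/((M:ℝ)*Φ)) (by positivity)
      rw [one_div_div] at b
      have m := mul_le_mul_of_nonneg_left b hL0.le
      have e : (L:ℝ) * (1 - (M:ℝ)*Φ/(L:ℝ)) = (L:ℝ) - (M:ℝ)*Φ := by field_simp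
      rw [e] at m
      linarith
    -- second term ≥ -L + MΦ in the case L < M, else = 0; combine with key2 variant
    rcases eq_or_lt_of_le hLMr with hEq | hlt
    · rw [← hEq]
      simp
      have hlogΦ : Real.log Φ ≤ 0 := Real.log_nonpos hΦ0.le hΦ1.le
      have : (L:ℝ)/((L:ℝ)*Φ) = Φ⁻¹ := by field_simp
      rw [this, Real.log_inv]
      nlinarith
    · have hML : (0:ℝ) < (M:ℝ) - L := by linarith
      have b := aux_log_lb (((M:ℝ)-L)/((M:ℝ)*(1-Φ))) (by positivity)
      rw [one_div_div] at b
      have m := mul_le_mul_of_nonneg_left b hML.le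
      have e : ((M:ℝ)-L) * (1 - (M:ℝ)*(1-Φ)/((M:ℝ)-L)) = ((M:ℝ)-L) - (M:ℝ)*(1-Φ) := by
        field_simp
      rw [e] at m
      linarith
  have hD1 : (L:ℝ) * (Real.log (L:ℝ) - Real.log ((M:ℝ)*Φ) - 1) ≤
      (M:ℝ) * binKL ((L:ℝ)/(M:ℝ)) Φ := by
    rw [hexpand]
    have hlogdiv : Real.log ((L:ℝ)/((M:ℝ)*Φ)) = Real.log (L:ℝ) - Real.log ((M:ℝ)*Φ) :=
      Real.log_div hL0.ne' (by positivity)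
    rw [hlogdiv]
    nlinarith [key2]
  by_cases h : Φ ≥ (L:ℝ)/((M:ℝ)-1)
  · rw [if_pos h, if_neg (not_lt.mpr h)]
    have hM1 : (0:ℝ) < (M:ℝ) - 1 := by linarith
    have h' : (L:ℝ) ≤ Φ * ((M:ℝ)-1) := (div_le_iff₀ hM1).mp h
    have hMΦ : (L:ℝ) ≤ (M:ℝ)*Φ := by nlinarith
    have hb : Real.log (L:ℝ) - Real.log ((M:ℝ)*Φ) - 1 ≤ 0 := by
      have := Real.log_le_log hL0 hMΦ
      linarith
    rw [max_eq_right hb]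
    simp
  · rw [if_neg h, if_pos (not_le.mp h)]
    rw [zero_add, mul_one, Real.exp_le_exp]
    have : (L:ℝ) * max (Real.log (L:ℝ) - Real.log ((M:ℝ)*Φ) - 1) 0 ≤
        (M:ℝ) * binKL ((L:ℝ)/(M:ℝ)) Φ := by
      rcases le_total (Real.log (L:ℝ) - Real.log ((M:ℝ)*Φ) - 1) 0 with hb | hb
      · rw [max_eq_right hb]
        simpa using hD0
      · rw [max_eq_left hb]
        exact hD1
    linarith
end

section
/- Given a codebook 𝒞 of size e^{nR} with ordinary (list size 1) mismatched-decoding error probability ε, construct the codebook 𝒞' of size e^{n(R+Θ)} consisting of e^{nΘ} identical copies of each codeword of 𝒞. Then the list-decoding error probability of 𝒞' with constant list size e^{nΘ} (error meaning the number of codewords with metric ≥ that of the transmitted codeword exceeds e^{nΘ}) equals ε. Consequently ℰ^{(n)}_q(R+Θ, Θ) ≤ ℰ^{(n)}_q(R), where ℰ^{(n)}_q denotes the infimum over codebooks of the respective error probabilities. -/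
open Finset Real
open scoped Classical

/-- Ordinary (list size 1) mismatched-decoding error probability of the
codebook `c` over the channel `W` with metric `q` (uniform messages):
an error occurs if the transmitted codeword is not the unique maximizer. -/
noncomputable def ordErr {𝒳 𝒴 ι : Type} [Fintype 𝒴] [Fintype ι]
    (W : 𝒳 → 𝒴 → ℝ) (q : 𝒳 → 𝒴 → ℝ) (c : ι → 𝒳) : ℝ :=
  (1 / (Fintype.card ι : ℝ)) * ∑ k, ∑ y,
    W (c k) y * (if ∃ j, j ≠ k ∧ q (c j) y ≥ q (c k) y then 1 else 0)

/-- List-decoding error probability with constant list size `L`: an error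
occurs if the number of codewords (counted with multiplicity) whose metric is
at least that of the transmitted codeword exceeds `L`. -/
noncomputable def listErr {𝒳 𝒴 ι : Type} [Fintype 𝒴] [Fintype ι]
    (W : 𝒳 → 𝒴 → ℝ) (q : 𝒳 → 𝒴 → ℝ) (c : ι → 𝒳) (L : ℝ) : ℝ :=
  (1 / (Fintype.card ι : ℝ)) * ∑ m, ∑ y,
    W (c m) y *
      (if L < ((Finset.univ.filter
          (fun m' => q (c m') y ≥ q (c m) y)).card : ℝ) then 1 else 0)

/-! In the replicated codebook every codeword of `c` occurs `L` times, so the number of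
codewords scoring at least as well as the transmitted one is `L · N`, where `N ≥ 1` is the
corresponding count in `c` (it includes the transmitted codeword itself). Hence `L · N > L`
exactly when `N > 1`, i.e. exactly when ordinary decoding fails, and averaging over the `L`
copies of each message gives the same error probability. Replicated codebooks are particular
codebooks of size `K · L`, which gives the inequality between the infima. -/

section Replication

variable {𝒳 𝒴 ι κ : Type} [Fintype ι] [Fintype κ]

lemma card_filter_comp_fst (p : ι → Prop) [DecidablePred p] :
    #(univ.filter fun z : ι × κ => p z.1) = Fintype.card κ * #(univ.filter p) := by
  rw [← univ_product_univ, filter_product_left, card_product, card_univ, mul_comm]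

lemma sum_comp_fst {M : Type} [AddCommMonoid M] (g : ι → M) :
    ∑ z : ι × κ, g z.1 = Fintype.card κ • ∑ i, g i := by
  simp only [Fintype.sum_prod_type, sum_const, card_univ, smul_sum]

lemma one_lt_card_iff_exists_ne_of_mem {α : Type} {s : Finset α} {a : α} (ha : a ∈ s) :
    1 < #s ↔ ∃ b ∈ s, b ≠ a :=
  ⟨fun hs => exists_mem_ne hs a, fun ⟨b, hb, hba⟩ => one_lt_card.mpr ⟨b, hb, a, ha, hba⟩⟩

lemma card_lt_card_filter_replicate_iff [Nonempty κ] (q : 𝒳 → 𝒴 → ℝ) (c : ι → 𝒳) (k : ι)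
    (y : 𝒴) :
    (Fintype.card κ : ℝ) < #(univ.filter fun z : ι × κ => q (c z.1) y ≥ q (c k) y)
      ↔ ∃ j, j ≠ k ∧ q (c j) y ≥ q (c k) y := by
  have hκ : (0 : ℝ) < Fintype.card κ := by exact_mod_cast Fintype.card_pos
  have hk : k ∈ univ.filter fun j => q (c j) y ≥ q (c k) y := by simp
  rw [card_filter_comp_fst (fun j => q (c j) y ≥ q (c k) y), Nat.cast_mul,
    lt_mul_iff_one_lt_right hκ, Nat.one_lt_cast, one_lt_card_iff_exists_ne_of_mem hk]
  simp only [mem_filter, mem_univ, true_and, and_comm]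

variable [Fintype 𝒴]

lemma listErr_nonneg (W : 𝒳 → 𝒴 → ℝ) (hW0 : ∀ x y, 0 ≤ W x y) (q : 𝒳 → 𝒴 → ℝ)
    (c : ι → 𝒳) (L : ℝ) : 0 ≤ listErr W q c L := by
  unfold listErr
  refine mul_nonneg (by positivity) (sum_nonneg fun m _ => sum_nonneg fun y _ => ?_)
  exact mul_nonneg (hW0 _ _) (by split_ifs <;> norm_num)

theorem listErr_replicate [Nonempty κ] (W : 𝒳 → 𝒴 → ℝ) (q : 𝒳 → 𝒴 → ℝ) (c : ι → 𝒳) :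
    listErr W q (fun z : ι × κ => c z.1) (Fintype.card κ) = ordErr W q c := by
  have hκ : (Fintype.card κ : ℝ) ≠ 0 := by exact_mod_cast Fintype.card_ne_zero
  simp only [listErr, ordErr, card_lt_card_filter_replicate_iff, Fintype.card_prod, Nat.cast_mul]
  rw [sum_comp_fst (fun k => ∑ y, W (c k) y * if ∃ j, j ≠ k ∧ q (c j) y ≥ q (c k) y then 1 else 0),
    nsmul_eq_mul]
  field_simp

end Replication

theorem stmt_14_general {𝒳 𝒴 : Type} [Fintype 𝒴] [Nonempty 𝒳]
    (K L : ℕ) (hL : 1 ≤ L)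
    (W : 𝒳 → 𝒴 → ℝ) (hW0 : ∀ x y, 0 ≤ W x y)
    (q : 𝒳 → 𝒴 → ℝ) :
    (∀ c : Fin K → 𝒳,
        listErr W q (fun ml : Fin K × Fin L => c ml.1) (L : ℝ) = ordErr W q c)
    ∧ (⨅ c' : Fin K × Fin L → 𝒳, listErr W q c' (L : ℝ))
        ≤ ⨅ c : Fin K → 𝒳, ordErr W q c := by
  have : NeZero L := ⟨by omega⟩
  have hrepl (c : Fin K → 𝒳) :
      listErr W q (fun ml : Fin K × Fin L => c ml.1) (L : ℝ) = ordErr W q c := by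
    simpa using listErr_replicate (κ := Fin L) W q c
  have hbdd : BddBelow (Set.range fun c' : Fin K × Fin L → 𝒳 => listErr W q c' (L : ℝ)) :=
    ⟨0, by rintro _ ⟨c', rfl⟩; exact listErr_nonneg W hW0 q c' L⟩
  exact ⟨hrepl, le_ciInf fun c => (ciInf_le hbdd _).trans_eq (hrepl c)⟩

/-- Replication construction: copying each codeword `e^{nΘ}` times turns an
ordinary mismatched code of rate `R` into a list code of rate `R+Θ` and list
size `e^{nΘ}` with the same error probability; hence
`ℰ^{(n)}_q(R+Θ,Θ) ≤ ℰ^{(n)}_q(R)`. -/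
theorem stmt_14 {𝒳 𝒴 : Type} [Fintype 𝒴] [Nonempty 𝒳]
    (K L : ℕ) (hK : 1 ≤ K) (hL : 1 ≤ L)
    (n R Θ : ℝ) (hn : 0 < n) (hΘ : 0 ≤ Θ)
    (hKR : (K : ℝ) = Real.exp (n * R)) (hLΘ : (L : ℝ) = Real.exp (n * Θ))
    (W : 𝒳 → 𝒴 → ℝ) (hW0 : ∀ x y, 0 ≤ W x y) (hW1 : ∀ x, ∑ y, W x y = 1)
    (q : 𝒳 → 𝒴 → ℝ) :
    (∀ c : Fin K → 𝒳,
        listErr W q (fun ml : Fin K × Fin L => c ml.1) (L : ℝ) = ordErr W q c)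
    ∧ (⨅ c' : Fin K × Fin L → 𝒳, listErr W q c' (L : ℝ))
        ≤ ⨅ c : Fin K → 𝒳, ordErr W q c :=
  stmt_14_general K L hL W hW0 q
end
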